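/- arXiv:2407.20543 — 3 statements merged into one kernel-verified Lean document; each statement's English description precedes it below -/
import Mathlib

section
/- If a POVM {Π^{a,b}}_{a,b∈{0,1}} on ℂ²⊗ℂ² consists of separable operators (each Π^{a,b} a finite sum of tensor products of positive semidefinite operators), then the average success probability of identifying a uniformly random Bell state, (1/4) Σ_{x1,x2} ⟨B^{x1x2}| Π^{x1,x2} |B^{x1x2}⟩, is at most 1/2. -/
/-!
A Bell state is `vec X` with `X Xᴴ = (1/2) • 1`, and `⟨vec X| P ⊗ Q |vec X⟩ = tr ((Xᴴ Q X) Pᵀ)`.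
For positive semidefinite `A, B` the entrywise bound `|A i j|² ≤ A i i · A j j` and AM-GM give
`tr (A B) ≤ tr A · tr B`; hence `⟨B| P ⊗ Q |B⟩ ≤ tr (Xᴴ Q X) · tr P = tr (P ⊗ Q) / 2`, and by
linearity `⟨B|Π|B⟩ ≤ tr Π / 2` for every separable `Π`. The traces of a POVM on `ℂ² ⊗ ℂ²` sum
to `tr 1 = 4`.
-/

open scoped BigOperators Kronecker ComplexOrder

/-- Bell state `|B^{x1 x2}⟩ = (|0 x1⟩ + (-1)^{x2} |1 x̄1⟩)/√2`. -/
noncomputable def bell (x1 x2 : ZMod 2) : ZMod 2 × ZMod 2 → ℂ :=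
  fun p => if p.2 = p.1 + x1 then ((-1 : ℂ) ^ ((x2 * p.1).val)) / (Real.sqrt 2 : ℂ) else 0

/-- A separable operator on `ℂ²⊗ℂ²`: a finite sum of tensor products of
positive semidefinite operators. -/
def SeparableOp (M : Matrix ((ZMod 2) × (ZMod 2)) ((ZMod 2) × (ZMod 2)) ℂ) : Prop :=
  ∃ (n : ℕ) (P Q : Fin n → Matrix (ZMod 2) (ZMod 2) ℂ),
    (∀ i, (P i).PosSemidef ∧ (Q i).PosSemidef) ∧ M = ∑ i, (P i) ⊗ₖ (Q i)

/-- Born-rule value `⟨ψ| M |ψ⟩`. -/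
noncomputable def born (M : Matrix ((ZMod 2) × (ZMod 2)) ((ZMod 2) × (ZMod 2)) ℂ)
    (ψ : ZMod 2 × ZMod 2 → ℂ) : ℂ :=
  dotProduct (fun p => star (ψ p)) (M.mulVec ψ)

open Matrix RCLike

namespace Matrix.PosSemidef

variable {𝕜 n : Type*} [RCLike 𝕜] {A B : Matrix n n 𝕜}

theorem norm_apply_sq_le (hA : A.PosSemidef) (i j : n) :
    ‖A i j‖ ^ 2 ≤ re (A i i) * re (A j j) := by
  classical
  have hdet := (hA.submatrix ![i, j]).det_nonneg
  rw [det_fin_two] at hdet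
  simp only [submatrix_apply, Matrix.cons_val_zero, Matrix.cons_val_one] at hdet
  rwa [← hA.1.coe_re_apply_self i, ← hA.1.coe_re_apply_self j, ← hA.1.apply j i, star_def,
    RCLike.mul_conj, ← ofReal_pow, ← ofReal_mul, ← ofReal_sub, ofReal_nonneg, sub_nonneg] at hdet

theorem re_apply_self_nonneg (hA : A.PosSemidef) (i : n) : 0 ≤ re (A i i) :=
  (nonneg_iff.mp hA.diag_nonneg).1

variable [Fintype n]

theorem re_trace_mul_le (hA : A.PosSemidef) (hB : B.PosSemidef) :
    re (A * B).trace ≤ re A.trace * re B.trace := by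
  set a : n → ℝ := fun i => re (A i i)
  set b : n → ℝ := fun i => re (B i i)
  have entry (i j : n) : re (A i j * B j i) ≤ (a i * b j + a j * b i) / 2 := by
    have hsq : (‖A i j‖ * ‖B j i‖) ^ 2 ≤ (a i * b j) * (a j * b i) := by
      rw [mul_pow]
      calc ‖A i j‖ ^ 2 * ‖B j i‖ ^ 2 ≤ (a i * a j) * (b j * b i) :=
            mul_le_mul (hA.norm_apply_sq_le i j) (hB.norm_apply_sq_le j i) (by positivity)
              (mul_nonneg (hA.re_apply_self_nonneg i) (hA.re_apply_self_nonneg j))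
        _ = (a i * b j) * (a j * b i) := by ring
    have hx := mul_nonneg (hA.re_apply_self_nonneg i) (hB.re_apply_self_nonneg j)
    have hy := mul_nonneg (hA.re_apply_self_nonneg j) (hB.re_apply_self_nonneg i)
    calc re (A i j * B j i) ≤ ‖A i j‖ * ‖B j i‖ := (re_le_norm _).trans (norm_mul _ _).le
      _ ≤ (a i * b j + a j * b i) / 2 := by
        nlinarith [sq_nonneg (a i * b j - a j * b i), norm_nonneg (A i j), norm_nonneg (B j i)]
  calc re (A * B).trace = ∑ i, ∑ j, re (A i j * B j i) := by
        simp only [trace, diag, mul_apply, map_sum]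
    _ ≤ ∑ i, ∑ j, (a i * b j + a j * b i) / 2 := by gcongr with i _ j _; exact entry i j
    _ = (∑ i, a i) * ∑ j, b j := by
        simp only [add_div, Finset.sum_add_distrib]
        rw [Finset.sum_comm (f := fun i j => a j * b i / 2), ← Finset.sum_add_distrib]
        simp only [mul_comm (a _), ← Finset.sum_add_distrib, add_halves, Finset.sum_mul_sum]
    _ = re A.trace * re B.trace := by simp only [trace, diag, map_sum, a, b]

theorem re_star_vec_dotProduct_kronecker_mulVec_vec_le {ι : Type*} [Fintype ι] [DecidableEq n]
    {P : Matrix ι ι 𝕜} {Q : Matrix n n 𝕜} (hP : P.PosSemidef) (hQ : Q.PosSemidef)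
    {X : Matrix n ι 𝕜} {r : ℝ} (hX : X * Xᴴ = (r : 𝕜) • 1) :
    re (star (vec X) ⬝ᵥ (P ⊗ₖ Q) *ᵥ vec X) ≤ r * re (P ⊗ₖ Q).trace := by
  calc re (star (vec X) ⬝ᵥ (P ⊗ₖ Q) *ᵥ vec X) = re ((Xᴴ * Q * X) * Pᵀ).trace := by
        rw [kronecker_mulVec_vec, star_vec_dotProduct_vec, Matrix.mul_assoc, Matrix.mul_assoc,
          Matrix.mul_assoc]
    _ ≤ re (Xᴴ * Q * X).trace * re Pᵀ.trace :=
        (hQ.conjTranspose_mul_mul_same X).re_trace_mul_le hP.transpose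
    _ = r * re (P ⊗ₖ Q).trace := by
        rw [trace_mul_cycle, hX, trace_kronecker, trace_transpose, Matrix.smul_mul,
          Matrix.one_mul, trace_smul, smul_eq_mul, re_ofReal_mul, mul_re,
          (nonneg_iff.mp hP.trace_nonneg).2]
        ring

end Matrix.PosSemidef

-- Chosen so that `vec (bellMatrix x1 x2) = bell x1 x2` holds by `rfl`.
noncomputable def bellMatrix (x1 x2 : ZMod 2) : Matrix (ZMod 2) (ZMod 2) ℂ :=
  of fun q p => bell x1 x2 (p, q)

theorem bellMatrix_mul_conjTranspose (x1 x2 : ZMod 2) :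
    bellMatrix x1 x2 * (bellMatrix x1 x2)ᴴ = ((1 / 2 : ℝ) : ℂ) • 1 := by
  have two_cases (z : ZMod 2) : z = 0 ∨ z = 1 := by decide +revert
  have hs : ((Real.sqrt 2 : ℝ) : ℂ) ^ 2 = 2 := by norm_cast; simp
  ext q q'
  rw [mul_apply, show (Finset.univ : Finset (ZMod 2)) = {0, 1} from rfl,
    Finset.sum_pair zero_ne_one]
  rcases two_cases x1 with rfl | rfl <;> rcases two_cases x2 with rfl | rfl <;>
    rcases two_cases q with rfl | rfl <;> rcases two_cases q' with rfl | rfl <;>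
    simp [bellMatrix, bell, ← pow_two, hs, div_pow, show (1 + 1 : ZMod 2) = 0 from rfl,
      ZMod.val_one]

theorem born_sum {ι : Type*} (s : Finset ι)
    (M : ι → Matrix (ZMod 2 × ZMod 2) (ZMod 2 × ZMod 2) ℂ) (ψ : ZMod 2 × ZMod 2 → ℂ) :
    born (∑ i ∈ s, M i) ψ = ∑ i ∈ s, born (M i) ψ := by
  simp only [born, sum_mulVec, dotProduct_sum]

theorem SeparableOp.re_born_bell_le {M : Matrix (ZMod 2 × ZMod 2) (ZMod 2 × ZMod 2) ℂ}
    (hM : SeparableOp M) (x1 x2 : ZMod 2) :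
    (born M (bell x1 x2)).re ≤ 1 / 2 * M.trace.re := by
  obtain ⟨n, P, Q, hPQ, rfl⟩ := hM
  rw [born_sum, trace_sum, Complex.re_sum, Complex.re_sum, Finset.mul_sum]
  exact Finset.sum_le_sum fun i _ =>
    (hPQ i).1.re_star_vec_dotProduct_kronecker_mulVec_vec_le (hPQ i).2
      (bellMatrix_mul_conjTranspose x1 x2)

/-- Any POVM with separable elements identifies a uniformly random Bell state
with probability at most `1/2`. -/
theorem separable_povm_bell_discrimination_bound
    (Pov : ZMod 2 → ZMod 2 → Matrix ((ZMod 2) × (ZMod 2)) ((ZMod 2) × (ZMod 2)) ℂ)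
    (hsep : ∀ a b, SeparableOp (Pov a b))
    (hsum : ∑ a : ZMod 2, ∑ b : ZMod 2, Pov a b = 1) :
    ((1 / 4 : ℂ) * ∑ x1 : ZMod 2, ∑ x2 : ZMod 2,
        born (Pov x1 x2) (bell x1 x2)).re ≤ 1 / 2 := by
  have htrace : ∑ a : ZMod 2, ∑ b : ZMod 2, (Pov a b).trace.re = 4 := by
    simp [← Complex.re_sum, ← trace_sum, hsum, trace_one]
  calc ((1 / 4 : ℂ) * ∑ x1 : ZMod 2, ∑ x2 : ZMod 2, born (Pov x1 x2) (bell x1 x2)).re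
      = 1 / 4 * ∑ x1 : ZMod 2, ∑ x2 : ZMod 2, (born (Pov x1 x2) (bell x1 x2)).re := by
        rw [show (1 / 4 : ℂ) = ((1 / 4 : ℝ) : ℂ) by norm_num, Complex.re_ofReal_mul]
        simp only [Complex.re_sum]
    _ ≤ 1 / 4 * ∑ a : ZMod 2, ∑ b : ZMod 2, 1 / 2 * (Pov a b).trace.re := by
        gcongr with a _ b _
        exact (hsep a b).re_born_bell_le a b
    _ = 1 / 2 := by simp only [← Finset.mul_sum, htrace]; norm_num
end

section
/- In the Baumeler–Wolf process, whenever maj(o_A,o_B,o_C) = 1 and the feedback is i = (ō_B, ō_C, ō_A), at least one party's feedback bit equals 0 while their own output bit analysis forces a guessing failure: concretely, for every (o_A,o_B,o_C) with maj = 1, at least one of the three conditions 'i_A = 0 and o_C ≠ 0', 'i_B = 0 and o_A ≠ 0', 'i_C = 0 and o_B ≠ 0' fails to give correct identification; formally, for each such triple there exists a party K ∈ {A,B,C} whose guess string in Table II is 000 while the true answer requires a nonzero elimination, so the winning condition g ∈ £^0 fails. -/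
/-- Majority of three bits. -/
def maj (a b c : Bool) : Bool := (a && b) || (b && c) || (a && c)

/-- The Baumeler–Wolf process: `i = (o_C, o_A, o_B)` if `maj = 0`,
`i = (ō_B, ō_C, ō_A)` if `maj = 1`. -/
def bwE (oA oB oC : Bool) : Bool × Bool × Bool :=
  if maj oA oB oC then (!oB, !oC, !oA) else (oC, oA, oB)

/-- Winning condition for a single party's guess `g = (g₀, g₁, g₁')` when the
true message is `00`: the guess lies in `$^{00} = {100, 001, 010, 011}`, i.e.
either `g₀ = 1` and `g₁g₁' = 00`, or `g₀ = 0` and `g₁g₁' ≠ 00`. -/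
def winGuess (g : Bool × Bool × Bool) : Prop :=
  (g.1 = true ∧ g.2.1 = false ∧ g.2.2 = false) ∨
  (g.1 = false ∧ ¬(g.2.1 = false ∧ g.2.2 = false))

/-- For message `x = 0`, with the deterministic measurement outcomes
`(az, ax), (bz, bx), (cz, cx)` of the parties on the Bell pairs they hold (so
`o_A = az·ax`, `o_B = bz·bx`, `o_C = cz·cx`, and each party's guess is the
feedback bit followed by the complemented outcomes of the neighbour who can
help them): for every outcome triple with `maj(o_A,o_B,o_C) = 1` the resulting
guess triple violates the winning condition, while for every triple with
`maj(o_A,o_B,o_C) = 0` it satisfies it. -/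
theorem baumeler_wolf_win_analysis (az ax bz bx cz cx : Bool) :
    let oA := az && ax
    let oB := bz && bx
    let oC := cz && cx
    let i := bwE oA oB oC
    let gA : Bool × Bool × Bool := (i.1, !cz, !cx)
    let gB : Bool × Bool × Bool := (i.2.1, !az, !ax)
    let gC : Bool × Bool × Bool := (i.2.2, !bz, !bx)
    (maj oA oB oC = true → ¬(winGuess gA ∧ winGuess gB ∧ winGuess gC)) ∧
    (maj oA oB oC = false → (winGuess gA ∧ winGuess gB ∧ winGuess gC)) := by
  simp only [winGuess, bwE, maj]
  cases az <;> cases ax <;> cases bz <;> cases bx <;> cases cz <;> cases cx <;> simp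
end

section
/- Given a bipartite correlation p(a,b|x,y) that decomposes as p = q·p₁ + (1−q)·p₂ with q ∈ [0,1], where p₁ is no-signaling from B to A (Σ_b p₁(a,b|x,y) independent of y) and p₂ is no-signaling from A to B (Σ_a p₂(a,b|x,y) independent of x), the GYNI success (1/4) Σ_{x,y∈{0,1}} p(a=y, b=x | x,y) is at most 1/2. -/
open scoped BigOperators

/-- Any convex mixture of one-way no-signaling bipartite correlations has GYNI
success `(1/4) Σ_{x,y} p(a=y, b=x | x,y)` at most `1/2`. Here `p a b x y` is the
probability of outputs `(a,b)` on inputs `(x,y)`. -/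
theorem gyni_bound_for_causal_correlations
    (q : ℝ) (p p1 p2 : Fin 2 → Fin 2 → Fin 2 → Fin 2 → ℝ)
    (hq0 : 0 ≤ q) (hq1 : q ≤ 1)
    (h1pos : ∀ a b x y, 0 ≤ p1 a b x y)
    (h1sum : ∀ x y, ∑ a : Fin 2, ∑ b : Fin 2, p1 a b x y = 1)
    (h2pos : ∀ a b x y, 0 ≤ p2 a b x y)
    (h2sum : ∀ x y, ∑ a : Fin 2, ∑ b : Fin 2, p2 a b x y = 1)
    (h1ns : ∀ a x y y', ∑ b : Fin 2, p1 a b x y = ∑ b : Fin 2, p1 a b x y')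
    (h2ns : ∀ b x x' y, ∑ a : Fin 2, p2 a b x y = ∑ a : Fin 2, p2 a b x' y)
    (hmix : ∀ a b x y, p a b x y = q * p1 a b x y + (1 - q) * p2 a b x y) :
    (1 / 4 : ℝ) * (∑ x : Fin 2, ∑ y : Fin 2, p y x x y) ≤ 1 / 2 := by
  have s1 : (∑ x : Fin 2, ∑ y : Fin 2, p1 y x x y) ≤ 2 := by
    have e1 := h1sum 0 0
    have e2 := h1sum 1 1
    have n1 := h1ns 1 0 1 0
    have n2 := h1ns 0 1 0 1
    simp only [Fin.sum_univ_two] at e1 e2 n1 n2 ⊢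
    have := h1pos 0 1 0 0; have := h1pos 1 1 0 1; have := h1pos 1 0 0 0
    have := h1pos 1 0 1 1; have := h1pos 0 0 1 0; have := h1pos 0 1 1 1
    linarith
  have s2 : (∑ x : Fin 2, ∑ y : Fin 2, p2 y x x y) ≤ 2 := by
    have e1 := h2sum 0 0
    have e2 := h2sum 1 1
    have n1 := h2ns 1 1 0 0
    have n2 := h2ns 0 0 1 1
    simp only [Fin.sum_univ_two] at e1 e2 n1 n2 ⊢
    have := h2pos 1 0 0 0; have := h2pos 0 0 0 1; have := h2pos 1 1 1 0
    have := h2pos 0 1 1 1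
    linarith
  simp only [Fin.sum_univ_two, hmix] at s1 s2 ⊢
  nlinarith [s1, s2, hq0, hq1]
end
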